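/- Let D ≥ 1 be an integer, E = ℂ^D with canonical basis (e_k), and let R_P ⊂ E^{⊗3} be the linear span of {e_ℓ⊗e_m⊗e_k − e_ℓ⊗e_k⊗e_m : 1 ≤ k < ℓ ≤ m ≤ D} ∪ {e_k⊗e_m⊗e_ℓ − e_m⊗e_k⊗e_ℓ : 1 ≤ k ≤ ℓ < m ≤ D}. Then inside E^{⊗5} one has (R_P⊗E⊗E) ∩ (E⊗R_P⊗E) ∩ (E⊗E⊗R_P) = 0; equivalently, the degree-5 homogeneous component of the dual cubic algebra P^! vanishes (and hence all components of degree ≥ 5 vanish). -/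

import Mathlib

/-!
Test an element `x` of the triple intersection against the coordinate functionals of the basis
`e_a ⊗ e_b ⊗ e_c ⊗ e_d ⊗ e_e`. Every element of `R_P` has coordinates whose sum over each Knuth
class of three-letter words vanishes; the singleton classes are the weakly increasing and the
strictly decreasing words, all other classes have two elements. Membership of `x` in
`R_P ⊗ E ⊗ E`, `E ⊗ R_P ⊗ E` and `E ⊗ E ⊗ R_P` transfers this to each of the three windows of a
five-letter word. A word with a monotone window has coordinate zero; otherwise the Knuth partner of
the first window has a monotone window, so the coordinate is minus a vanishing one.
-/

set_option maxSynthPendingDepth 5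

open TensorProduct

/-- The canonical basis vector `e_k` of `ℂ^D`. -/
noncomputable def stdBasis (D : ℕ) (k : Fin D) : Fin D → ℂ := Pi.single k 1

/-- The relation space `R_P ⊂ (ℂ^D)^{⊗3}` of the plactic algebra: the span of the Knuth
relation tensors `e_ℓ⊗e_m⊗e_k - e_ℓ⊗e_k⊗e_m` for `k < ℓ ≤ m` and
`e_k⊗e_m⊗e_ℓ - e_m⊗e_k⊗e_ℓ` for `k ≤ ℓ < m`. -/
noncomputable def placticRelations (D : ℕ) :
    Submodule ℂ ((Fin D → ℂ) ⊗[ℂ] ((Fin D → ℂ) ⊗[ℂ] (Fin D → ℂ))) :=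
  Submodule.span ℂ
    ({t | ∃ k l m : Fin D, k < l ∧ l ≤ m ∧
        t = stdBasis D l ⊗ₜ[ℂ] (stdBasis D m ⊗ₜ[ℂ] stdBasis D k)
            - stdBasis D l ⊗ₜ[ℂ] (stdBasis D k ⊗ₜ[ℂ] stdBasis D m)} ∪
      {t | ∃ k l m : Fin D, k ≤ l ∧ l < m ∧
        t = stdBasis D k ⊗ₜ[ℂ] (stdBasis D m ⊗ₜ[ℂ] stdBasis D l)
            - stdBasis D m ⊗ₜ[ℂ] (stdBasis D k ⊗ₜ[ℂ] stdBasis D l)})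

section Embeddings

variable (E : Type*) [AddCommGroup E] [Module ℂ E]

/-- Reassociation `E^{⊗3} ⊗ E^{⊗2} ≃ E^{⊗5}`. -/
noncomputable def assocFive :
    ((E ⊗[ℂ] (E ⊗[ℂ] E)) ⊗[ℂ] (E ⊗[ℂ] E)) ≃ₗ[ℂ]
      E ⊗[ℂ] (E ⊗[ℂ] (E ⊗[ℂ] (E ⊗[ℂ] E))) :=
  (TensorProduct.assoc ℂ E (E ⊗[ℂ] E) (E ⊗[ℂ] E)).trans
    (TensorProduct.congr (LinearEquiv.refl ℂ E) (TensorProduct.assoc ℂ E E (E ⊗[ℂ] E)))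

/-- Reassociation `E^{⊗3} ⊗ E ≃ E^{⊗4}`. -/
noncomputable def assocFour :
    ((E ⊗[ℂ] (E ⊗[ℂ] E)) ⊗[ℂ] E) ≃ₗ[ℂ] E ⊗[ℂ] (E ⊗[ℂ] (E ⊗[ℂ] E)) :=
  (TensorProduct.assoc ℂ E (E ⊗[ℂ] E) E).trans
    (TensorProduct.congr (LinearEquiv.refl ℂ E) (TensorProduct.assoc ℂ E E E))

variable {E}

/-- The subspace `R ⊗ E ⊗ E` of `E^{⊗5}` determined by a subspace `R ⊆ E^{⊗3}`. -/
noncomputable def subREE (R : Submodule ℂ (E ⊗[ℂ] (E ⊗[ℂ] E))) :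
    Submodule ℂ (E ⊗[ℂ] (E ⊗[ℂ] (E ⊗[ℂ] (E ⊗[ℂ] E)))) :=
  Submodule.map (assocFive E).toLinearMap
    (LinearMap.range (TensorProduct.map R.subtype (LinearMap.id (M := E ⊗[ℂ] E))))

/-- The subspace `R ⊗ E` of `E^{⊗4}` determined by a subspace `R ⊆ E^{⊗3}`. -/
noncomputable def subRE (R : Submodule ℂ (E ⊗[ℂ] (E ⊗[ℂ] E))) :
    Submodule ℂ (E ⊗[ℂ] (E ⊗[ℂ] (E ⊗[ℂ] E))) :=
  Submodule.map (assocFour E).toLinearMap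
    (LinearMap.range (TensorProduct.map R.subtype (LinearMap.id (M := E))))

/-- The subspace `E ⊗ p` of `E ⊗ M` determined by a subspace `p ⊆ M`. -/
noncomputable def subEl {M : Type*} [AddCommMonoid M] [Module ℂ M] (p : Submodule ℂ M) :
    Submodule ℂ (E ⊗[ℂ] M) :=
  LinearMap.range (p.subtype.lTensor E)

/-- The subspace `E ⊗ R ⊗ E` of `E^{⊗5}`. -/
noncomputable def subERE (R : Submodule ℂ (E ⊗[ℂ] (E ⊗[ℂ] E))) :
    Submodule ℂ (E ⊗[ℂ] (E ⊗[ℂ] (E ⊗[ℂ] (E ⊗[ℂ] E)))) :=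
  subEl (subRE R)

/-- The subspace `E ⊗ E ⊗ R` of `E^{⊗5}`. -/
noncomputable def subEER (R : Submodule ℂ (E ⊗[ℂ] (E ⊗[ℂ] E))) :
    Submodule ℂ (E ⊗[ℂ] (E ⊗[ℂ] (E ⊗[ℂ] (E ⊗[ℂ] E)))) :=
  subEl (subEl R)

end Embeddings

open Module

section Knuth

variable {α M : Type*} [LinearOrder α]

/-- `f` sums to zero over every Knuth class of three-letter words. -/
structure IsKnuthBalanced [Zero M] [Add M] (f : α → α → α → M) : Prop where
  increasing : ∀ ⦃a b c⦄, a ≤ b → b ≤ c → f a b c = 0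
  decreasing : ∀ ⦃a b c⦄, c < b → b < a → f a b c = 0
  swap_right : ∀ ⦃a b c⦄, c < a → a ≤ b → f a b c + f a c b = 0
  swap_left : ∀ ⦃a b c⦄, a ≤ c → c < b → f a b c + f b a c = 0

theorem IsKnuthBalanced.eq_zero_of_windows [AddZeroClass M] {F : α → α → α → α → α → M}
    (h₁ : ∀ d e, IsKnuthBalanced fun a b c => F a b c d e)
    (h₂ : ∀ a e, IsKnuthBalanced fun b c d => F a b c d e)
    (h₃ : ∀ a b, IsKnuthBalanced fun c d e => F a b c d e) (a b c d e : α) :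
    F a b c d e = 0 := by
  have monotone_window : ∀ a b c d e : α,
      ((a ≤ b ∧ b ≤ c ∨ c < b ∧ b < a) ∨ (b ≤ c ∧ c ≤ d ∨ d < c ∧ c < b) ∨
        (c ≤ d ∧ d ≤ e ∨ e < d ∧ d < c)) → F a b c d e = 0 := by
    rintro a b c d e ((⟨h, h'⟩ | ⟨h, h'⟩) | (⟨h, h'⟩ | ⟨h, h'⟩) | (⟨h, h'⟩ | ⟨h, h'⟩))
    exacts [(h₁ d e).increasing h h', (h₁ d e).decreasing h h', (h₂ a e).increasing h h',
      (h₂ a e).decreasing h h', (h₃ a b).increasing h h', (h₃ a b).decreasing h h']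
  by_cases hw : (a ≤ b ∧ b ≤ c ∨ c < b ∧ b < a) ∨ (b ≤ c ∧ c ≤ d ∨ d < c ∧ c < b) ∨
      (c ≤ d ∧ d ≤ e ∨ e < d ∧ d < c)
  · exact monotone_window a b c d e hw
  -- The Knuth partner of `a b c d e` in the first window has a monotone window.
  obtain (⟨h, h'⟩ | ⟨h, h'⟩) | (⟨h, h'⟩ | ⟨h, h'⟩) :
      (c < a ∧ a ≤ b ∨ b < a ∧ a ≤ c) ∨ (a ≤ c ∧ c < b ∨ b ≤ c ∧ c < a) := by grind
  · simpa [monotone_window a c b d e (by grind)] using (h₁ d e).swap_right h h'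
  · simpa [monotone_window a c b d e (by grind)] using (h₁ d e).swap_right h h'
  · simpa [monotone_window b a c d e (by grind)] using (h₁ d e).swap_left h h'
  · simpa [monotone_window b a c d e (by grind)] using (h₁ d e).swap_left h h'

end Knuth

section Dual

variable {α K V W : Type*} [LinearOrder α] [CommSemiring K] [AddCommMonoid V] [Module K V]
  [AddCommMonoid W] [Module K W]

-- Each condition of `IsKnuthBalanced` says that one linear combination of the `Φ a b c` vanishes.
theorem isKnuthBalanced_dual_transfer {s : Set V} {Φ : α → α → α → Dual K V}
    (hΦ : ∀ t ∈ s, IsKnuthBalanced fun a b c => Φ a b c t) (T : Dual K V →ₗ[K] Dual K W) {x : W}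
    (hT : ∀ ψ : Dual K V, (∀ t ∈ s, ψ t = 0) → T ψ x = 0) :
    IsKnuthBalanced fun a b c => T (Φ a b c) x where
  increasing _ _ _ h h' := hT _ fun t ht => (hΦ t ht).increasing h h'
  decreasing _ _ _ h h' := hT _ fun t ht => (hΦ t ht).decreasing h h'
  swap_right a b c h h' := by
    simpa using hT (Φ a b c + Φ a c b) fun t ht => (hΦ t ht).swap_right h h'
  swap_left a b c h h' := by
    simpa using hT (Φ a b c + Φ b a c) fun t ht => (hΦ t ht).swap_left h h'

end Dual

section Pairing

variable {K M N : Type*} [CommSemiring K] [AddCommMonoid M] [Module K M] [AddCommMonoid N]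
  [Module K N]

variable (K M N) in
noncomputable def dualTmul : Dual K M →ₗ[K] Dual K N →ₗ[K] Dual K (M ⊗[K] N) :=
  (TensorProduct.mk K _ _).compr₂ (dualDistrib K M N)

@[simp]
theorem dualTmul_apply_tmul (f : Dual K M) (g : Dual K N) (m : M) (n : N) :
    dualTmul K M N f g (m ⊗ₜ n) = f m * g n := rfl

theorem Module.Basis.tensorProduct_coord {ι κ : Type*} (b : Basis ι K M) (c : Basis κ K N)
    (i : ι) (j : κ) :
    (b.tensorProduct c).coord (i, j) = dualTmul K M N (b.coord i) (c.coord j) := by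
  ext m n
  simp [mul_comm]

end Pairing

section Annihilators

variable {E : Type*} [AddCommGroup E] [Module ℂ E]

theorem dualTmul_mem_dualAnnihilator_subEl {M : Type*} [AddCommMonoid M] [Module ℂ M]
    {p : Submodule ℂ M} (g : Dual ℂ E) {ψ : Dual ℂ M} (hψ : ψ ∈ p.dualAnnihilator) :
    dualTmul ℂ E M g ψ ∈ (subEl p).dualAnnihilator := by
  rw [Submodule.mem_dualAnnihilator] at hψ ⊢
  rintro _ ⟨y, rfl⟩
  induction y using TensorProduct.induction_on with
  | zero => simp
  | tmul m n => simp [hψ n n.2]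
  | add y z hy hz => simp_all

theorem dualTmul_comp_assocFive_symm_mem_dualAnnihilator_subREE
    {R : Submodule ℂ (E ⊗[ℂ] (E ⊗[ℂ] E))} {ψ : Dual ℂ (E ⊗[ℂ] (E ⊗[ℂ] E))}
    (hψ : ψ ∈ R.dualAnnihilator) (g : Dual ℂ (E ⊗[ℂ] E)) :
    (dualTmul ℂ _ _ ψ g).comp (assocFive E).symm.toLinearMap ∈ (subREE R).dualAnnihilator := by
  rw [Submodule.mem_dualAnnihilator] at hψ ⊢
  rintro _ ⟨_, ⟨y, rfl⟩, rfl⟩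
  induction y using TensorProduct.induction_on with
  | zero => simp
  | tmul r n => simp [hψ r r.2]
  | add y z hy hz => simp_all

theorem dualTmul_comp_assocFour_symm_mem_dualAnnihilator_subRE
    {R : Submodule ℂ (E ⊗[ℂ] (E ⊗[ℂ] E))} {ψ : Dual ℂ (E ⊗[ℂ] (E ⊗[ℂ] E))}
    (hψ : ψ ∈ R.dualAnnihilator) (g : Dual ℂ E) :
    (dualTmul ℂ _ _ ψ g).comp (assocFour E).symm.toLinearMap ∈ (subRE R).dualAnnihilator := by
  rw [Submodule.mem_dualAnnihilator] at hψ ⊢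
  rintro _ ⟨_, ⟨y, rfl⟩, rfl⟩
  induction y using TensorProduct.induction_on with
  | zero => simp
  | tmul r n => simp [hψ r r.2]
  | add y z hy hz => simp_all

end Annihilators

namespace Module.Basis

variable {ι K E : Type*} [CommSemiring K] [AddCommMonoid E] [Module K E] (b : Basis ι K E)

noncomputable abbrev tensorSquare : Basis (ι × ι) K (E ⊗[K] E) := b.tensorProduct b

noncomputable abbrev tensorCube : Basis (ι × ι × ι) K (E ⊗[K] (E ⊗[K] E)) :=
  b.tensorProduct b.tensorSquare

noncomputable abbrev tensorFourth :
    Basis (ι × ι × ι × ι) K (E ⊗[K] (E ⊗[K] (E ⊗[K] E))) :=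
  b.tensorProduct b.tensorCube

noncomputable abbrev tensorFifth :
    Basis (ι × ι × ι × ι × ι) K (E ⊗[K] (E ⊗[K] (E ⊗[K] (E ⊗[K] E)))) :=
  b.tensorProduct b.tensorFourth

end Module.Basis

section Coordinates

variable {ι E : Type*} [AddCommGroup E] [Module ℂ E] (b : Basis ι ℂ E)

theorem coord_tensorFifth_eq_comp_assocFive_symm (i j k l m : ι) :
    b.tensorFifth.coord (i, j, k, l, m) =
      (dualTmul ℂ _ _ (b.tensorCube.coord (i, j, k)) (b.tensorSquare.coord (l, m))).comp
        (assocFive E).symm.toLinearMap := by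
  rw [LinearEquiv.eq_comp_toLinearMap_symm]
  ext u v w p q
  simp [Basis.tensorProduct_coord, assocFive, mul_assoc]

theorem coord_tensorFourth_eq_comp_assocFour_symm (i j k l : ι) :
    b.tensorFourth.coord (i, j, k, l) =
      (dualTmul ℂ _ _ (b.tensorCube.coord (i, j, k)) (b.coord l)).comp
        (assocFour E).symm.toLinearMap := by
  rw [LinearEquiv.eq_comp_toLinearMap_symm]
  ext u v w p
  simp [Basis.tensorProduct_coord, assocFour, mul_assoc]

end Coordinates

section Windows

variable {ι E : Type*} [LinearOrder ι] [AddCommGroup E] [Module ℂ E] {b : Basis ι ℂ E}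
  {R : Submodule ℂ (E ⊗[ℂ] (E ⊗[ℂ] E))}

theorem isKnuthBalanced_dualTmul_of_mem_subEl {M : Type*} [AddCommMonoid M] [Module ℂ M]
    {p : Submodule ℂ M} {Φ : ι → ι → ι → Dual ℂ M}
    (hΦ : ∀ t ∈ p, IsKnuthBalanced fun i j k => Φ i j k t) (g : Dual ℂ E) {x : E ⊗[ℂ] M}
    (hx : x ∈ subEl p) :
    IsKnuthBalanced fun i j k => dualTmul ℂ E M g (Φ i j k) x :=
  isKnuthBalanced_dual_transfer hΦ (dualTmul ℂ E M g) fun ψ hψ =>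
    (Submodule.mem_dualAnnihilator _).1
      (dualTmul_mem_dualAnnihilator_subEl g ((Submodule.mem_dualAnnihilator ψ).2 hψ)) x hx

theorem isKnuthBalanced_coord_of_mem_subREE
    (hR : ∀ t ∈ R, IsKnuthBalanced fun i j k => b.tensorCube.coord (i, j, k) t)
    {x : E ⊗[ℂ] (E ⊗[ℂ] (E ⊗[ℂ] (E ⊗[ℂ] E)))} (hx : x ∈ subREE R) (l m : ι) :
    IsKnuthBalanced fun i j k => b.tensorFifth.coord (i, j, k, l, m) x := by
  simp only [coord_tensorFifth_eq_comp_assocFive_symm]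
  exact isKnuthBalanced_dual_transfer hR
    ((assocFive E).symm.toLinearMap.dualMap ∘ₗ
      (dualTmul ℂ _ _).flip (b.tensorSquare.coord (l, m)))
    fun ψ hψ => (Submodule.mem_dualAnnihilator _).1
      (dualTmul_comp_assocFive_symm_mem_dualAnnihilator_subREE
        ((Submodule.mem_dualAnnihilator ψ).2 hψ) _) x hx

theorem isKnuthBalanced_coord_of_mem_subRE
    (hR : ∀ t ∈ R, IsKnuthBalanced fun i j k => b.tensorCube.coord (i, j, k) t)
    {x : E ⊗[ℂ] (E ⊗[ℂ] (E ⊗[ℂ] E))} (hx : x ∈ subRE R) (l : ι) :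
    IsKnuthBalanced fun i j k => b.tensorFourth.coord (i, j, k, l) x := by
  simp only [coord_tensorFourth_eq_comp_assocFour_symm]
  exact isKnuthBalanced_dual_transfer hR
    ((assocFour E).symm.toLinearMap.dualMap ∘ₗ (dualTmul ℂ _ _).flip (b.coord l))
    fun ψ hψ => (Submodule.mem_dualAnnihilator _).1
      (dualTmul_comp_assocFour_symm_mem_dualAnnihilator_subRE
        ((Submodule.mem_dualAnnihilator ψ).2 hψ) _) x hx

theorem isKnuthBalanced_coord_of_mem_subERE
    (hR : ∀ t ∈ R, IsKnuthBalanced fun i j k => b.tensorCube.coord (i, j, k) t)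
    {x : E ⊗[ℂ] (E ⊗[ℂ] (E ⊗[ℂ] (E ⊗[ℂ] E)))} (hx : x ∈ subERE R) (i m : ι) :
    IsKnuthBalanced fun j k l => b.tensorFifth.coord (i, j, k, l, m) x := by
  simpa only [← Basis.tensorProduct_coord] using isKnuthBalanced_dualTmul_of_mem_subEl
    (fun t ht => isKnuthBalanced_coord_of_mem_subRE hR ht m) (b.coord i) hx

theorem isKnuthBalanced_coord_of_mem_subEER
    (hR : ∀ t ∈ R, IsKnuthBalanced fun i j k => b.tensorCube.coord (i, j, k) t)
    {x : E ⊗[ℂ] (E ⊗[ℂ] (E ⊗[ℂ] (E ⊗[ℂ] E)))} (hx : x ∈ subEER R) (i j : ι) :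
    IsKnuthBalanced fun k l m => b.tensorFifth.coord (i, j, k, l, m) x := by
  simpa only [← Basis.tensorProduct_coord] using isKnuthBalanced_dualTmul_of_mem_subEl
    (fun t ht => isKnuthBalanced_dualTmul_of_mem_subEl hR (b.coord j) ht) (b.coord i) hx

theorem subREE_inf_subERE_inf_subEER_eq_bot
    (hR : ∀ t ∈ R, IsKnuthBalanced fun i j k => b.tensorCube.coord (i, j, k) t) :
    subREE R ⊓ subERE R ⊓ subEER R = ⊥ := by
  refine eq_bot_iff.2 fun x ⟨⟨hx₁, hx₂⟩, hx₃⟩ => ?_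
  rw [Submodule.mem_bot, ← b.tensorFifth.forall_coord_eq_zero_iff]
  rintro ⟨i, j, k, l, m⟩
  exact IsKnuthBalanced.eq_zero_of_windows
    (F := fun i j k l m => b.tensorFifth.coord (i, j, k, l, m) x)
    (isKnuthBalanced_coord_of_mem_subREE hR hx₁) (isKnuthBalanced_coord_of_mem_subERE hR hx₂)
    (isKnuthBalanced_coord_of_mem_subEER hR hx₃) i j k l m

end Windows

theorem isKnuthBalanced_coord_of_mem_placticRelations {D : ℕ}
    {t : (Fin D → ℂ) ⊗[ℂ] ((Fin D → ℂ) ⊗[ℂ] (Fin D → ℂ))} (ht : t ∈ placticRelations D) :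
    IsKnuthBalanced fun i j k => (Pi.basisFun ℂ (Fin D)).tensorCube.coord (i, j, k) t := by
  refine isKnuthBalanced_dual_transfer ?_ LinearMap.id fun ψ hψ =>
    (Submodule.span_le (p := LinearMap.ker ψ)).2 hψ ht
  rintro _ (⟨k, l, m, hkl, hlm, rfl⟩ | ⟨k, l, m, hkl, hlm, rfl⟩) <;>
    constructor <;> intro a b c h h' <;>
    simp [stdBasis, Pi.single_apply] <;> grind

theorem plactic_dual_degree_five_vanishes_general (D : ℕ) :
    subREE (placticRelations D) ⊓ subERE (placticRelations D) ⊓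
        subEER (placticRelations D) = ⊥ :=
  subREE_inf_subERE_inf_subEER_eq_bot fun _ => isKnuthBalanced_coord_of_mem_placticRelations

/-- Inside `(ℂ^D)^{⊗5}` one has `(R_P⊗E⊗E) ∩ (E⊗R_P⊗E) ∩ (E⊗E⊗R_P) = 0`:
the degree-5 component of the dual cubic algebra `P^!` of the plactic algebra vanishes
(and hence all components of degree ≥ 5 vanish). -/
theorem plactic_dual_degree_five_vanishes (D : ℕ) (hD : 1 ≤ D) :
    subREE (placticRelations D) ⊓ subERE (placticRelations D) ⊓
        subEER (placticRelations D) = ⊥ :=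
  plactic_dual_degree_five_vanishes_general D
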